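/- Let p > 0 and suppose there exist constants k, K > 0 and exponents q ≥ r ≥ 0 such that k|y|^r ≤ |s(y)| ≤ K|y|^q for all |y| ≥ 1, and suppose r ≤ p ≤ q. If ∫_ℝ |y|^p ν(dy) < ∞ and ∫_1^∞ y^{p-r-1} |c_Y(y) - c_Y(-y)| dy < ∞, then ∫_0^∞ z^{p-1}(ν₊(z)+ν₋(z)) dz < ∞; and if ∫_0^∞ z^{p-1}(ν₊(z)+ν₋(z)) dz < ∞, then ∫_ℝ |y|^p ν(dy) < ∞ and ∫_1^∞ y^{p-q-1} |c_Y(y) - c_Y(-y)| dy < ∞. In particular, when r = q these conditions are equivalent. -/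

import Mathlib

/-!
For `z > 0` write `N(z) = ν₊(z) + ν₋(z)` and `Δ(z) = c_Y(z) - c_Y(-z)`. Two pointwise comparisons
drive the theorem: `|Δ(z)| ≤ N(z) (s(z) - s(-z))`, and `N(z) ≤ |Δ(z)| / m + 2 (ν[z,∞) + ν(-∞,-z])`
whenever `0 < m ≤ min (s z) (-s (-z))`. Both come from reading `ζ₋(z)` as the largest slope of a
chord of `c_Y` (plotted against `s`) issued from the point `-z`: on `[z, ∞)` the increments of
`c_Y` have slope at most `ν((z,∞))`, and near `0` the chord slopes are at most
`s(y) / (-s(-z)) → 0`, so if the supremum is not attained a compactness argument forces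
`Δ(z) ≤ ν((z,∞)) (s(z) - s(-z))`. Reflecting `y ↦ -y` exchanges `ζ₊` and `ζ₋`, so only one
side needs proof. Integrating against `z^(p-1)`, with `N ≤ 4` near `0`, the growth bounds on `s`
at `±z`, and the layer-cake formula `∫ |y|^p dν = p ∫ z^(p-1) ν(|y| ≥ z) dz`, gives both
implications.
-/

open MeasureTheory Set Filter
open scoped ENNReal NNReal Classical

/-- The function `c_Y` of the paper: `c_Y y = ∫_{[0,∞)} min(s(y),s(w)) ν(dw)` for `y ≥ 0`,
`c_Y y = ∫_{(-∞,0)} min(|s(y)|,|s(w)|) ν(dw)` for `y < 0`. -/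
noncomputable def cY (s : ℝ → ℝ) (ν : Measure ℝ) (y : ℝ) : ℝ :=
  if 0 ≤ y then ∫ w in Ici (0 : ℝ), min (s y) (s w) ∂ν
  else ∫ w in Iio (0 : ℝ), min |s y| |s w| ∂ν

/-- The slope `(c_Y(z) - c_Y(-y))/(s(z) - s(-y))` in the definition of `ζ₊, ρ₊`. -/
noncomputable def slopeYPlus (s : ℝ → ℝ) (ν : Measure ℝ) (z y : ℝ) : ℝ :=
  (cY s ν z - cY s ν (-y)) / (s z - s (-y))

/-- The slope `(c_Y(y) - c_Y(-z))/(s(y) - s(-z))` in the definition of `ζ₋, ρ₋`. -/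
noncomputable def slopeYMinus (s : ℝ → ℝ) (ν : Measure ℝ) (z y : ℝ) : ℝ :=
  (cY s ν y - cY s ν (-z)) / (s y - s (-z))

/-- The set of `y > 0` attaining the infimum in the definition of `ρ₊(z)`. -/
def argYPlus (s : ℝ → ℝ) (ν : Measure ℝ) (z : ℝ) : Set ℝ :=
  {y | 0 < y ∧ ∀ x, 0 < x → slopeYPlus s ν z y ≤ slopeYPlus s ν z x}

/-- The set of `y > 0` attaining the supremum in the definition of `ρ₋(z)`. -/
def argYMinus (s : ℝ → ℝ) (ν : Measure ℝ) (z : ℝ) : Set ℝ :=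
  {y | 0 < y ∧ ∀ x, 0 < x → slopeYMinus s ν z x ≤ slopeYMinus s ν z y}

/-- `ζ₊(z) = -inf_{y>0} (c_Y(z)-c_Y(-y))/(s(z)-s(-y))` if attained, `0` otherwise. -/
noncomputable def zetaPlus (s : ℝ → ℝ) (ν : Measure ℝ) (z : ℝ) : ℝ :=
  if (argYPlus s ν z).Nonempty then -sInf (slopeYPlus s ν z '' Ioi 0) else 0

/-- `ζ₋(z) = sup_{y>0} (c_Y(y)-c_Y(-z))/(s(y)-s(-z))` if attained, `0` otherwise. -/
noncomputable def zetaMinus (s : ℝ → ℝ) (ν : Measure ℝ) (z : ℝ) : ℝ :=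
  if (argYMinus s ν z).Nonempty then sSup (slopeYMinus s ν z '' Ioi 0) else 0

/-- `ν₊(z) = ζ₊(z) + ν([z,∞))`, the tail distribution function of the supremum of the
stopped process for the optimal embedding. -/
noncomputable def nuPlus (s : ℝ → ℝ) (ν : Measure ℝ) (z : ℝ) : ℝ :=
  zetaPlus s ν z + (ν (Ici z)).toReal

/-- `ν₋(z) = ν((-∞,-z]) + ζ₋(z)`, the tail distribution function of minus the infimum of
the stopped process for the optimal embedding. -/
noncomputable def nuMinus (s : ℝ → ℝ) (ν : Measure ℝ) (z : ℝ) : ℝ :=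
  (ν (Iic (-z))).toReal + zetaMinus s ν z

open Topology

section LIntegral

variable {α : Type*} [MeasurableSpace α] {μ : Measure α}

theorem lintegral_ofReal_lt_top_of_le_mul {f g : α → ℝ} {c : ℝ} (hc : 0 ≤ c)
    (hfg : ∀ᵐ x ∂μ, f x ≤ c * g x) (hg : ∫⁻ x, ENNReal.ofReal (g x) ∂μ < ∞) :
    ∫⁻ x, ENNReal.ofReal (f x) ∂μ < ∞ :=
  calc ∫⁻ x, ENNReal.ofReal (f x) ∂μ ≤ ∫⁻ x, ENNReal.ofReal c * ENNReal.ofReal (g x) ∂μ :=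
        lintegral_mono_ae <| hfg.mono fun _ hx => by
          rw [← ENNReal.ofReal_mul hc]; exact ENNReal.ofReal_le_ofReal hx
    _ = ENNReal.ofReal c * ∫⁻ x, ENNReal.ofReal (g x) ∂μ :=
        lintegral_const_mul' _ _ ENNReal.ofReal_ne_top
    _ < ∞ := ENNReal.mul_lt_top ENNReal.ofReal_lt_top hg

theorem lintegral_ofReal_lt_top_of_le_add {f g h : α → ℝ} {a b : ℝ} (ha : 0 ≤ a) (hb : 0 ≤ b)
    (hh : AEMeasurable h μ) (hfgh : ∀ᵐ x ∂μ, f x ≤ a * g x + b * h x)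
    (hg : ∫⁻ x, ENNReal.ofReal (g x) ∂μ < ∞) (hh' : ∫⁻ x, ENNReal.ofReal (h x) ∂μ < ∞) :
    ∫⁻ x, ENNReal.ofReal (f x) ∂μ < ∞ :=
  calc ∫⁻ x, ENNReal.ofReal (f x) ∂μ
      ≤ ∫⁻ x, ENNReal.ofReal (a * g x) + ENNReal.ofReal (b * h x) ∂μ :=
        lintegral_mono_ae <| hfgh.mono fun _ hx =>
          (ENNReal.ofReal_le_ofReal hx).trans ENNReal.ofReal_add_le
    _ = ∫⁻ x, ENNReal.ofReal (a * g x) ∂μ + ∫⁻ x, ENNReal.ofReal (b * h x) ∂μ :=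
        lintegral_add_right' _ (ENNReal.measurable_ofReal.comp_aemeasurable (hh.const_mul b))
    _ < ∞ := ENNReal.add_lt_top.2
        ⟨lintegral_ofReal_lt_top_of_le_mul ha (ae_of_all _ fun _ => le_rfl) hg,
          lintegral_ofReal_lt_top_of_le_mul hb (ae_of_all _ fun _ => le_rfl) hh'⟩

end LIntegral

theorem exists_isMaxOn_Ioi {φ : ℝ → ℝ} {z : ℝ} (hz : 0 < z) (hφ : ContinuousOn φ (Ioc 0 z))
    (hge : ∀ y, z ≤ y → φ y ≤ φ z) (h0 : ∀ᶠ y in 𝓝[>] 0, φ y ≤ φ z) :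
    ∃ y₀ ∈ Ioi 0, IsMaxOn φ (Ioi 0) y₀ := by
  obtain ⟨u, hu, hus⟩ := mem_nhdsGT_iff_exists_Ioo_subset.1 h0
  have hη : 0 < min u z := lt_min hu hz
  obtain ⟨y₀, hy₀, hmax⟩ := isCompact_Icc.exists_isMaxOn (nonempty_Icc.2 (min_le_right u z))
    (hφ.mono fun y hy => ⟨hη.trans_le hy.1, hy.2⟩)
  have hzy₀ : φ z ≤ φ y₀ := hmax ⟨min_le_right _ _, le_rfl⟩
  refine ⟨y₀, hη.trans_le hy₀.1, fun y (hy : 0 < y) => ?_⟩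
  rcases lt_or_ge y (min u z) with hyη | hηy
  · exact (hus ⟨hy, hyη.trans_le (min_le_left _ _)⟩).trans hzy₀
  rcases le_total y z with hyz | hzy
  · exact hmax ⟨hηy, hyz⟩
  · exact (hge y hzy).trans hzy₀

section Tail

variable {ν : Measure ℝ}

noncomputable def twoSidedTail (ν : Measure ℝ) (z : ℝ) : ℝ :=
  (ν (Ici z)).toReal + (ν (Iic (-z))).toReal

theorem twoSidedTail_nonneg (z : ℝ) : 0 ≤ twoSidedTail ν z :=
  add_nonneg ENNReal.toReal_nonneg ENNReal.toReal_nonneg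

theorem antitone_twoSidedTail [IsFiniteMeasure ν] : Antitone (twoSidedTail ν) := fun _ _ hab =>
  add_le_add (ENNReal.toReal_mono (measure_ne_top _ _) (measure_mono (Ici_subset_Ici.2 hab)))
    (ENNReal.toReal_mono (measure_ne_top _ _) (measure_mono (Iic_subset_Iic.2 (neg_le_neg hab))))

theorem ofReal_twoSidedTail [IsFiniteMeasure ν] (z : ℝ) :
    ENNReal.ofReal (twoSidedTail ν z) = ν (Ici z) + ν (Iic (-z)) := by
  rw [twoSidedTail, ENNReal.ofReal_add ENNReal.toReal_nonneg ENNReal.toReal_nonneg,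
    ENNReal.ofReal_toReal (measure_ne_top _ _), ENNReal.ofReal_toReal (measure_ne_top _ _)]

theorem lintegral_abs_rpow_lt_top_iff (ν : Measure ℝ) [IsFiniteMeasure ν] {p : ℝ} (hp : 0 < p) :
    ∫⁻ y, ENNReal.ofReal (|y| ^ p) ∂ν < ∞ ↔
      ∫⁻ z in Ioi 0, ENNReal.ofReal (z ^ (p - 1) * twoSidedTail ν z) < ∞ := by
  have hset (z : ℝ) : {a : ℝ | z ≤ |a|} = Ici z ∪ Iic (-z) := by
    ext a; simp [le_abs', or_comm]
  have hlayer (z : ℝ) : ENNReal.ofReal (z ^ (p - 1) * twoSidedTail ν z) =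
      (ν (Ici z) + ν (Iic (-z))) * ENNReal.ofReal (z ^ (p - 1)) := by
    rw [ENNReal.ofReal_mul' (twoSidedTail_nonneg z), ofReal_twoSidedTail, mul_comm]
  have hp' : ENNReal.ofReal p ≠ 0 := (ENNReal.ofReal_pos.2 hp).ne'
  simp_rw [lintegral_rpow_eq_lintegral_meas_le_mul ν (ae_of_all _ abs_nonneg)
    measurable_abs.aemeasurable hp, hlayer, hset]
  constructor
  · intro h
    calc ∫⁻ z in Ioi 0, (ν (Ici z) + ν (Iic (-z))) * ENNReal.ofReal (z ^ (p - 1))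
        ≤ ∫⁻ z in Ioi 0, 2 * (ν (Ici z ∪ Iic (-z)) * ENNReal.ofReal (z ^ (p - 1))) :=
          lintegral_mono fun z => by
            rw [← mul_assoc, two_mul]
            gcongr
            exacts [subset_union_left, subset_union_right]
      _ = 2 * ∫⁻ z in Ioi 0, ν (Ici z ∪ Iic (-z)) * ENNReal.ofReal (z ^ (p - 1)) :=
          lintegral_const_mul' _ _ ENNReal.ofNat_ne_top
      _ < ∞ := ENNReal.mul_lt_top ENNReal.ofNat_lt_top
          (ENNReal.lt_top_of_mul_ne_top_right h.ne hp')
  · refine fun h => ENNReal.mul_lt_top ENNReal.ofReal_lt_top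
      ((lintegral_mono fun z => ?_).trans_lt h)
    gcongr
    exact measure_union_le _ _

end Tail

section CY

variable {s : ℝ → ℝ} {ν : Measure ℝ}

theorem cY_nonneg (hmono : StrictMono s) (hs0 : s 0 = 0) (y : ℝ) : 0 ≤ cY s ν y := by
  rw [cY]
  split_ifs with hy
  · exact setIntegral_nonneg measurableSet_Ici fun w hw =>
      le_min (hs0 ▸ hmono.monotone hy) (hs0 ▸ hmono.monotone hw)
  · exact setIntegral_nonneg measurableSet_Iio fun _ _ => le_min (abs_nonneg _) (abs_nonneg _)

theorem integrableOn_min_Ici (hs : Continuous s) (hmono : StrictMono s) (hs0 : s 0 = 0)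
    [IsFiniteMeasure ν] {y : ℝ} (hy : 0 ≤ y) :
    IntegrableOn (fun w => min (s y) (s w)) (Ici 0) ν := by
  refine Integrable.mono' (integrable_const (s y)) (continuous_const.min hs).aestronglyMeasurable
    ((ae_restrict_iff' measurableSet_Ici).2 (ae_of_all _ fun w hw => ?_))
  rw [Real.norm_eq_abs, abs_of_nonneg (le_min (hs0 ▸ hmono.monotone hy) (hs0 ▸ hmono.monotone hw))]
  exact min_le_left _ _

theorem cY_le (hs : Continuous s) (hmono : StrictMono s) (hs0 : s 0 = 0)
    [IsProbabilityMeasure ν] {y : ℝ} (hy : 0 ≤ y) : cY s ν y ≤ s y := by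
  rw [cY, if_pos hy]
  calc ∫ w in Ici 0, min (s y) (s w) ∂ν ≤ ∫ _ in Ici 0, s y ∂ν :=
        setIntegral_mono (integrableOn_min_Ici hs hmono hs0 hy)
          (integrableOn_const (measure_ne_top _ _)) fun _ => min_le_left _ _
    _ = ν.real (Ici 0) * s y := setIntegral_const _
    _ ≤ s y := mul_le_of_le_one_left (hs0 ▸ hmono.monotone hy) measureReal_le_one

theorem cY_sub_cY_le (hs : Continuous s) (hmono : StrictMono s) (hs0 : s 0 = 0)
    [IsFiniteMeasure ν] {z y : ℝ} (hz : 0 ≤ z) (hzy : z ≤ y) :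
    cY s ν y - cY s ν z ≤ (s y - s z) * (ν (Ioi z)).toReal := by
  have hy := hz.trans hzy
  rw [cY, if_pos hy, cY, if_pos hz, ← integral_sub (integrableOn_min_Ici hs hmono hs0 hy)
    (integrableOn_min_Ici hs hmono hs0 hz)]
  calc ∫ w in Ici 0, (min (s y) (s w) - min (s z) (s w)) ∂ν
      ≤ ∫ w in Ici 0, (Ioi z).indicator (fun _ => s y - s z) w ∂ν := by
        refine setIntegral_mono_on ((integrableOn_min_Ici hs hmono hs0 hy).sub
          (integrableOn_min_Ici hs hmono hs0 hz)) ((integrable_const _).indicator measurableSet_Ioi)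
          measurableSet_Ici fun w _ => ?_
        rcases lt_or_ge z w with hzw | hwz
        · rw [indicator_of_mem (mem_Ioi.2 hzw), min_eq_left (hmono.monotone hzw.le)]
          exact sub_le_sub_right (min_le_left _ _) _
        · rw [indicator_of_notMem (notMem_Ioi.2 hwz), min_eq_right (hmono.monotone hwz),
            min_eq_right (hmono.monotone (hwz.trans hzy)), sub_self]
    _ ≤ ∫ w, (Ioi z).indicator (fun _ => s y - s z) w ∂ν :=
        setIntegral_le_integral ((integrable_const _).indicator measurableSet_Ioi)
          (ae_of_all _ fun w => indicator_nonneg (fun _ _ => sub_nonneg.2 (hmono.monotone hzy)) w)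
    _ = (s y - s z) * (ν (Ioi z)).toReal := by
        rw [integral_indicator_const _ measurableSet_Ioi, smul_eq_mul, mul_comm]; rfl

theorem cY_le_cY (hs : Continuous s) (hmono : StrictMono s) (hs0 : s 0 = 0)
    [IsFiniteMeasure ν] {z y : ℝ} (hz : 0 ≤ z) (hzy : z ≤ y) : cY s ν z ≤ cY s ν y := by
  have hy := hz.trans hzy
  simp only [cY, if_pos hy, if_pos hz]
  exact setIntegral_mono (integrableOn_min_Ici hs hmono hs0 hz)
    (integrableOn_min_Ici hs hmono hs0 hy) fun _ => min_le_min_right _ (hmono.monotone hzy)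

theorem continuousOn_cY (hs : Continuous s) (hmono : StrictMono s) (hs0 : s 0 = 0)
    [IsProbabilityMeasure ν] : ContinuousOn (cY s ν) (Ici 0) := by
  have hlip {y y' : ℝ} (hy : 0 ≤ y) (hy' : 0 ≤ y') :
      dist (cY s ν y) (cY s ν y') ≤ dist (s y) (s y') := by
    wlog h : y' ≤ y generalizing y y'
    · rw [dist_comm, dist_comm (s y)]; exact this hy' hy (le_of_not_ge h)
    rw [Real.dist_eq, Real.dist_eq, abs_of_nonneg (sub_nonneg.2 (cY_le_cY hs hmono hs0 hy' h)),
      abs_of_nonneg (sub_nonneg.2 (hmono.monotone h))]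
    exact (cY_sub_cY_le hs hmono hs0 hy' h).trans
      (mul_le_of_le_one_right (sub_nonneg.2 (hmono.monotone h)) measureReal_le_one)
  intro y hy
  rw [Metric.continuousWithinAt_iff]
  intro ε hε
  obtain ⟨δ, hδ, hδs⟩ := Metric.continuous_iff.1 hs y ε hε
  exact ⟨δ, hδ, fun {_} hx hxy => (hlip hx hy).trans_lt (hδs _ hxy)⟩

end CY

section Reflection

variable {s : ℝ → ℝ} {ν : Measure ℝ}

def reflect (s : ℝ → ℝ) (y : ℝ) : ℝ := -s (-y)

theorem continuous_reflect (hs : Continuous s) : Continuous (reflect s) :=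
  (hs.comp continuous_neg).neg

theorem strictMono_reflect (hmono : StrictMono s) : StrictMono (reflect s) :=
  fun _ _ h => neg_lt_neg (hmono (neg_lt_neg h))

theorem reflect_zero (hs0 : s 0 = 0) : reflect s 0 = 0 := by simp [reflect, hs0]

instance isFiniteMeasure_neg [IsFiniteMeasure ν] : IsFiniteMeasure ν.neg :=
  Measure.isFiniteMeasure_map ν Neg.neg

instance isProbabilityMeasure_neg [IsProbabilityMeasure ν] : IsProbabilityMeasure ν.neg :=
  Measure.isProbabilityMeasure_map measurable_neg.aemeasurable

theorem setIntegral_neg_measure (t : Set ℝ) (f : ℝ → ℝ) :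
    ∫ w in t, f w ∂ν.neg = ∫ w in -t, f (-w) ∂ν :=
  (MeasurableEquiv.neg ℝ).measurableEmbedding.setIntegral_map f t

theorem neg_apply_Ioi (z : ℝ) : ν.neg (Ioi z) = ν (Iio (-z)) := by
  rw [Measure.neg_apply, neg_Ioi]

theorem cY_reflect (hmono : StrictMono s) (hs0 : s 0 = 0) {y : ℝ} (hy : y ≠ 0) :
    cY (reflect s) ν.neg y = cY s ν (-y) := by
  -- the reflected domains of integration differ from `[0, ∞)`, `(-∞, 0)` only at `0`,
  -- where the integrand `min _ (s 0)` vanishes, so no assumption on `ν {0}` is needed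
  rcases hy.lt_or_gt with hy | hy
  · have hsy : 0 < s (-y) := hs0 ▸ hmono (neg_pos.2 hy)
    rw [cY, if_neg hy.not_ge, cY, if_pos (neg_pos.2 hy).le, setIntegral_neg_measure, neg_Iio,
      neg_zero,
      setIntegral_eq_of_subset_of_forall_sdiff_eq_zero measurableSet_Ici Ioi_subset_Ici_self]
    · refine setIntegral_congr_fun measurableSet_Ioi fun w (hw : 0 < w) => ?_
      simp only [reflect, neg_neg, abs_neg, abs_of_pos hsy, abs_of_pos (hs0 ▸ hmono hw)]
    · rintro w ⟨hw, hw'⟩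
      obtain rfl : w = 0 := le_antisymm (not_lt.1 hw') hw
      simp [hs0, hsy.le]
  · have hsy : s (-y) < 0 := hs0 ▸ hmono (neg_lt_zero.2 hy)
    rw [cY, if_pos hy.le, cY, if_neg (neg_lt_zero.2 hy).not_ge, setIntegral_neg_measure, neg_Ici,
      neg_zero,
      setIntegral_eq_of_subset_of_forall_sdiff_eq_zero measurableSet_Iic Iio_subset_Iic_self]
    · refine setIntegral_congr_fun measurableSet_Iio fun w (hw : w < 0) => ?_
      simp only [reflect, neg_neg, abs_of_neg hsy, abs_of_neg (hs0 ▸ hmono hw)]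
    · rintro w ⟨hw, hw'⟩
      obtain rfl : w = 0 := le_antisymm hw (not_lt.1 hw')
      simp [reflect, hs0, hsy.le]

theorem slopeYMinus_reflect (hmono : StrictMono s) (hs0 : s 0 = 0) {z y : ℝ} (hz : 0 < z)
    (hy : 0 < y) : slopeYMinus (reflect s) ν.neg z y = -slopeYPlus s ν z y := by
  rw [slopeYMinus, slopeYPlus, cY_reflect hmono hs0 hy.ne',
    cY_reflect hmono hs0 (neg_ne_zero.2 hz.ne'), reflect, reflect, neg_neg, ← neg_div, neg_sub]
  ring_nf

theorem zetaMinus_reflect (hmono : StrictMono s) (hs0 : s 0 = 0) {z : ℝ} (hz : 0 < z) :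
    zetaMinus (reflect s) ν.neg z = zetaPlus s ν z := by
  have himage : slopeYMinus (reflect s) ν.neg z '' Ioi 0 = -(slopeYPlus s ν z '' Ioi 0) := by
    rw [← image_neg_eq_neg, image_image]
    exact image_congr fun y hy => slopeYMinus_reflect hmono hs0 hz hy
  have harg : argYMinus (reflect s) ν.neg z = argYPlus s ν z := by
    ext y
    refine and_congr_right fun hy => forall₂_congr fun x hx => ?_
    rw [slopeYMinus_reflect hmono hs0 hz hx, slopeYMinus_reflect hmono hs0 hz hy, neg_le_neg_iff]
  rw [zetaMinus, zetaPlus, harg, himage, Real.sSup_neg]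

end Reflection

section ZetaMinus

variable {s : ℝ → ℝ} {ν : Measure ℝ}

theorem zetaMinus_eq_slopeYMinus {z y₀ : ℝ} (h : y₀ ∈ argYMinus s ν z) :
    zetaMinus s ν z = slopeYMinus s ν z y₀ := by
  rw [zetaMinus, if_pos ⟨y₀, h⟩]
  exact IsGreatest.csSup_eq ⟨⟨y₀, h.1, rfl⟩, by rintro _ ⟨x, hx, rfl⟩; exact h.2 x hx⟩

theorem zetaMinus_nonneg (hs : Continuous s) (hmono : StrictMono s) (hs0 : s 0 = 0)
    [IsFiniteMeasure ν] {z : ℝ} (hz : 0 < z) : 0 ≤ zetaMinus s ν z := by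
  by_cases h : (argYMinus s ν z).Nonempty
  swap
  · rw [zetaMinus, if_neg h]
  obtain ⟨y₀, hy₀, hmax⟩ := h
  rw [zetaMinus_eq_slopeYMinus ⟨hy₀, hmax⟩]
  by_contra! hneg
  -- a negative maximal slope would be beaten by the slope at `y₀ + 1`
  have hd₀ : 0 < s y₀ - s (-z) := sub_pos.2 (hmono ((neg_neg_of_pos hz).trans hy₀))
  have hd₁ : s y₀ - s (-z) < s (y₀ + 1) - s (-z) := sub_lt_sub_right (hmono (lt_add_one y₀)) _
  have hnum : cY s ν y₀ - cY s ν (-z) ≤ cY s ν (y₀ + 1) - cY s ν (-z) :=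
    sub_le_sub_right (cY_le_cY hs hmono hs0 hy₀.le (lt_add_one y₀).le) _
  have hle := hmax (y₀ + 1) (by linarith)
  rw [slopeYMinus, div_neg_iff] at hneg
  rw [slopeYMinus, slopeYMinus, div_le_div_iff₀ (hd₀.trans hd₁) hd₀] at hle
  rcases hneg with ⟨_, hd⟩ | ⟨hN, _⟩
  · linarith
  · nlinarith

theorem zetaMinus_le_one (hs : Continuous s) (hmono : StrictMono s) (hs0 : s 0 = 0)
    [IsProbabilityMeasure ν] {z : ℝ} (hz : 0 < z) : zetaMinus s ν z ≤ 1 := by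
  by_cases h : (argYMinus s ν z).Nonempty
  swap
  · rw [zetaMinus, if_neg h]; exact zero_le_one
  obtain ⟨y₀, hy₀, hmax⟩ := h
  rw [zetaMinus_eq_slopeYMinus ⟨hy₀, hmax⟩, slopeYMinus,
    div_le_one (sub_pos.2 (hmono ((neg_neg_of_pos hz).trans hy₀)))]
  linarith [cY_le (ν := ν) hs hmono hs0 hy₀.le, cY_nonneg (ν := ν) hmono hs0 (-z),
    (hs0 ▸ hmono (neg_neg_of_pos hz) : s (-z) < 0)]

theorem zetaMinus_le (hs : Continuous s) (hmono : StrictMono s) (hs0 : s 0 = 0)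
    [IsFiniteMeasure ν] {z : ℝ} (hz : 0 < z) :
    zetaMinus s ν z ≤
      max (cY s ν z - cY s ν (-z)) 0 / (-s (-z)) + (ν (Ioi z)).toReal := by
  have hsnz : 0 < -s (-z) := neg_pos.2 (hs0 ▸ hmono (neg_neg_of_pos hz))
  have hmax_div : 0 ≤ max (cY s ν z - cY s ν (-z)) 0 / (-s (-z)) :=
    div_nonneg (le_max_right _ _) hsnz.le
  have hβ : 0 ≤ (ν (Ioi z)).toReal := ENNReal.toReal_nonneg
  by_cases h : (argYMinus s ν z).Nonempty
  swap
  · rw [zetaMinus, if_neg h]; positivity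
  obtain ⟨y₀, hy₀, hmax⟩ := h
  have hsy₀ : 0 < s y₀ := hs0 ▸ hmono hy₀
  have hd₀ : 0 < s y₀ - s (-z) := by linarith
  rw [zetaMinus_eq_slopeYMinus ⟨hy₀, hmax⟩]
  rcases le_or_gt y₀ z with hyz | hzy
  · refine le_add_of_le_of_nonneg ?_ hβ
    calc slopeYMinus s ν z y₀
        ≤ max (cY s ν y₀ - cY s ν (-z)) 0 / (s y₀ - s (-z)) :=
          div_le_div_of_nonneg_right (le_max_left _ _) hd₀.le
      _ ≤ max (cY s ν y₀ - cY s ν (-z)) 0 / (-s (-z)) :=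
          div_le_div_of_nonneg_left (le_max_right _ _) hsnz (by linarith)
      _ ≤ max (cY s ν z - cY s ν (-z)) 0 / (-s (-z)) :=
          div_le_div_of_nonneg_right (max_le_max_right _
            (sub_le_sub_right (cY_le_cY hs hmono hs0 hy₀.le hyz) _)) hsnz.le
  · -- beyond `z` the chord can only be as steep as `ν((z, ∞))` allows
    refine le_add_of_nonneg_of_le hmax_div ?_
    set ζ := slopeYMinus s ν z y₀
    have hdz : 0 < s z - s (-z) := sub_pos.2 (hmono (neg_lt_self hz))
    have hζ₀ : ζ * (s y₀ - s (-z)) = cY s ν y₀ - cY s ν (-z) := div_mul_cancel₀ _ hd₀.ne'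
    have hζz : cY s ν z - cY s ν (-z) ≤ ζ * (s z - s (-z)) := (div_le_iff₀ hdz).1 (hmax z hz)
    have hinc := cY_sub_cY_le (ν := ν) hs hmono hs0 hz.le hzy.le
    refine le_of_mul_le_mul_right (a := s y₀ - s z) ?_ (sub_pos.2 (hmono hzy))
    nlinarith

theorem cY_sub_cY_neg_le_zetaMinus (hs : Continuous s) (hmono : StrictMono s) (hs0 : s 0 = 0)
    [IsProbabilityMeasure ν] {z : ℝ} (hz : 0 < z) :
    cY s ν z - cY s ν (-z) ≤ (zetaMinus s ν z + (ν (Ioi z)).toReal) * (s z - s (-z)) := by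
  have hsnz : 0 < -s (-z) := neg_pos.2 (hs0 ▸ hmono (neg_neg_of_pos hz))
  have hd (y : ℝ) (hy : 0 < y) : 0 < s y - s (-z) :=
    sub_pos.2 (hmono ((neg_neg_of_pos hz).trans hy))
  set β := (ν (Ioi z)).toReal
  have hβ : 0 ≤ β := ENNReal.toReal_nonneg
  by_cases h : (argYMinus s ν z).Nonempty
  · obtain ⟨y₀, hy₀⟩ := h
    have hζ : slopeYMinus s ν z z ≤ zetaMinus s ν z := zetaMinus_eq_slopeYMinus hy₀ ▸ hy₀.2 z hz
    rw [slopeYMinus, div_le_iff₀ (hd z hz)] at hζ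
    nlinarith [hd z hz]
  rw [zetaMinus, if_neg h, zero_add]
  by_contra! hlt
  -- otherwise the chord slope `L` at `z` beats the slopes near `0` and beyond `z`,
  -- so by compactness the supremum would be attained
  set L := slopeYMinus s ν z z
  have hLd : L * (s z - s (-z)) = cY s ν z - cY s ν (-z) := div_mul_cancel₀ _ (hd z hz).ne'
  have hβL : β < L := (lt_div_iff₀ (hd z hz)).2 hlt
  have hcont : ContinuousOn (slopeYMinus s ν z) (Ioc 0 z) :=
    (((continuousOn_cY hs hmono hs0).mono fun _ hy => hy.1.le).sub continuousOn_const).div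
      (hs.continuousOn.sub continuousOn_const) fun y hy => (hd y hy.1).ne'
  have hge (y : ℝ) (hzy : z ≤ y) : slopeYMinus s ν z y ≤ L := by
    rw [slopeYMinus, div_le_iff₀ (hd y (hz.trans_le hzy))]
    nlinarith [cY_sub_cY_le (ν := ν) hs hmono hs0 hz.le hzy,
      mul_le_mul_of_nonneg_left hβL.le (sub_nonneg.2 (hmono.monotone hzy))]
  have h0 : ∀ᶠ y in 𝓝[>] 0, slopeYMinus s ν z y ≤ L := by
    have hs_lim : Tendsto s (𝓝[>] 0) (𝓝 0) := by
      simpa only [hs0] using (hs.tendsto 0).mono_left nhdsWithin_le_nhds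
    filter_upwards [hs_lim.eventually (gt_mem_nhds (mul_pos (hβ.trans_lt hβL) hsnz)),
      self_mem_nhdsWithin] with y hsy (hy : 0 < y)
    rw [slopeYMinus, div_le_iff₀ (hd y hy)]
    nlinarith [cY_le (ν := ν) hs hmono hs0 hy.le, cY_nonneg (ν := ν) hmono hs0 (-z), hs0 ▸ hmono hy]
  obtain ⟨y₀, hy₀, hmax⟩ := exists_isMaxOn_Ioi hz hcont hge h0
  exact h ⟨y₀, hy₀, fun x hx => hmax hx⟩

end ZetaMinus

section ZetaPlus

variable {s : ℝ → ℝ} {ν : Measure ℝ}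

theorem zetaPlus_nonneg (hs : Continuous s) (hmono : StrictMono s) (hs0 : s 0 = 0)
    [IsFiniteMeasure ν] {z : ℝ} (hz : 0 < z) : 0 ≤ zetaPlus s ν z :=
  zetaMinus_reflect hmono hs0 hz ▸
    zetaMinus_nonneg (continuous_reflect hs) (strictMono_reflect hmono) (reflect_zero hs0) hz

theorem zetaPlus_le_one (hs : Continuous s) (hmono : StrictMono s) (hs0 : s 0 = 0)
    [IsProbabilityMeasure ν] {z : ℝ} (hz : 0 < z) : zetaPlus s ν z ≤ 1 :=
  zetaMinus_reflect hmono hs0 hz ▸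
    zetaMinus_le_one (continuous_reflect hs) (strictMono_reflect hmono) (reflect_zero hs0) hz

theorem zetaPlus_le (hs : Continuous s) (hmono : StrictMono s) (hs0 : s 0 = 0)
    [IsFiniteMeasure ν] {z : ℝ} (hz : 0 < z) :
    zetaPlus s ν z ≤ max (cY s ν (-z) - cY s ν z) 0 / s z + (ν (Iio (-z))).toReal := by
  have h := zetaMinus_le (ν := ν.neg) (continuous_reflect hs) (strictMono_reflect hmono)
    (reflect_zero hs0) hz
  rw [zetaMinus_reflect hmono hs0 hz, cY_reflect hmono hs0 hz.ne',
    cY_reflect hmono hs0 (neg_ne_zero.2 hz.ne')] at h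
  simpa only [reflect, neg_neg, neg_apply_Ioi] using h

theorem cY_neg_sub_cY_le_zetaPlus (hs : Continuous s) (hmono : StrictMono s)
    (hs0 : s 0 = 0) [IsProbabilityMeasure ν] {z : ℝ} (hz : 0 < z) :
    cY s ν (-z) - cY s ν z ≤ (zetaPlus s ν z + (ν (Iio (-z))).toReal) * (s z - s (-z)) := by
  have h := cY_sub_cY_neg_le_zetaMinus (ν := ν.neg) (continuous_reflect hs)
    (strictMono_reflect hmono) (reflect_zero hs0) hz
  rw [zetaMinus_reflect hmono hs0 hz, cY_reflect hmono hs0 hz.ne',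
    cY_reflect hmono hs0 (neg_ne_zero.2 hz.ne')] at h
  simpa only [reflect, neg_neg, neg_apply_Ioi, sub_neg_eq_add, neg_add_eq_sub] using h

end ZetaPlus

section NuSum

variable {s : ℝ → ℝ} {ν : Measure ℝ}

theorem twoSidedTail_le_nuPlus_add_nuMinus (hs : Continuous s) (hmono : StrictMono s)
    (hs0 : s 0 = 0) [IsFiniteMeasure ν] {z : ℝ} (hz : 0 < z) :
    twoSidedTail ν z ≤ nuPlus s ν z + nuMinus s ν z := by
  rw [twoSidedTail, nuPlus, nuMinus]
  linarith [zetaPlus_nonneg (ν := ν) hs hmono hs0 hz, zetaMinus_nonneg (ν := ν) hs hmono hs0 hz]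

theorem nuPlus_add_nuMinus_le_four (hs : Continuous s) (hmono : StrictMono s) (hs0 : s 0 = 0)
    [IsProbabilityMeasure ν] {z : ℝ} (hz : 0 < z) : nuPlus s ν z + nuMinus s ν z ≤ 4 := by
  rw [nuPlus, nuMinus]
  linarith [zetaPlus_le_one (ν := ν) hs hmono hs0 hz, zetaMinus_le_one (ν := ν) hs hmono hs0 hz,
    show (ν (Ici z)).toReal ≤ 1 from measureReal_le_one,
    show (ν (Iic (-z))).toReal ≤ 1 from measureReal_le_one]

theorem abs_cY_sub_cY_neg_le (hs : Continuous s) (hmono : StrictMono s)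
    (hs0 : s 0 = 0) [IsProbabilityMeasure ν] {z : ℝ} (hz : 0 < z) :
    |cY s ν z - cY s ν (-z)| ≤ (nuPlus s ν z + nuMinus s ν z) * (s z - s (-z)) := by
  have hd : 0 ≤ s z - s (-z) := sub_nonneg.2 (hmono.monotone (neg_le_self hz.le))
  have hIio : (ν (Iio (-z))).toReal ≤ (ν (Iic (-z))).toReal := measureReal_mono Iio_subset_Iic_self
  have hIoi : (ν (Ioi z)).toReal ≤ (ν (Ici z)).toReal := measureReal_mono Ioi_subset_Ici_self
  have hzetaPlus := zetaPlus_nonneg (ν := ν) hs hmono hs0 hz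
  have hzetaMinus := zetaMinus_nonneg (ν := ν) hs hmono hs0 hz
  have hplus : zetaPlus s ν z + (ν (Iio (-z))).toReal ≤ nuPlus s ν z + nuMinus s ν z := by
    rw [nuPlus, nuMinus]; linarith [ENNReal.toReal_nonneg (a := ν (Ici z))]
  have hminus : zetaMinus s ν z + (ν (Ioi z)).toReal ≤ nuPlus s ν z + nuMinus s ν z := by
    rw [nuPlus, nuMinus]; linarith [ENNReal.toReal_nonneg (a := ν (Iic (-z)))]
  rw [abs_le]
  constructor
  · linarith [cY_neg_sub_cY_le_zetaPlus (ν := ν) hs hmono hs0 hz,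
      mul_le_mul_of_nonneg_right hplus hd]
  · linarith [cY_sub_cY_neg_le_zetaMinus (ν := ν) hs hmono hs0 hz,
      mul_le_mul_of_nonneg_right hminus hd]

theorem nuPlus_add_nuMinus_le (hs : Continuous s) (hmono : StrictMono s) (hs0 : s 0 = 0)
    [IsFiniteMeasure ν] {z m : ℝ} (hz : 0 < z) (hm : 0 < m) (hmz : m ≤ s z)
    (hmz' : m ≤ -s (-z)) :
    nuPlus s ν z + nuMinus s ν z ≤ |cY s ν z - cY s ν (-z)| / m + 2 * twoSidedTail ν z := by
  set D := cY s ν z - cY s ν (-z)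
  have hplus : zetaPlus s ν z ≤ max (-D) 0 / m + (ν (Iic (-z))).toReal := by
    refine (zetaPlus_le hs hmono hs0 hz).trans
      (add_le_add ?_ (measureReal_mono Iio_subset_Iic_self))
    rw [neg_sub]
    exact div_le_div_of_nonneg_left (le_max_right _ _) hm hmz
  have hminus : zetaMinus s ν z ≤ max D 0 / m + (ν (Ici z)).toReal :=
    (zetaMinus_le hs hmono hs0 hz).trans (add_le_add
      (div_le_div_of_nonneg_left (le_max_right _ _) hm hmz') (measureReal_mono Ioi_subset_Ici_self))
  have habs : max D 0 / m + max (-D) 0 / m = |D| / m := by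
    rw [← add_div, max_zero_add_max_neg_zero_eq_abs_self]
  rw [nuPlus, nuMinus, twoSidedTail]
  linarith

end NuSum

section PolynomialScale

variable {s : ℝ → ℝ} {ν : Measure ℝ}

theorem lintegral_nuPlus_add_nuMinus_lt_top (hs : Continuous s) (hmono : StrictMono s)
    (hs0 : s 0 = 0) [IsProbabilityMeasure ν] {p r k : ℝ} (hp : 0 < p) (hk : 0 < k)
    (hlow : ∀ y : ℝ, 1 ≤ |y| → k * |y| ^ r ≤ |s y|)
    (hmom : ∫⁻ y, ENNReal.ofReal (|y| ^ p) ∂ν < ∞)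
    (hD : ∫⁻ y in Ici (1 : ℝ),
      ENNReal.ofReal (y ^ (p - r - 1) * |cY s ν y - cY s ν (-y)|) < ∞) :
    ∫⁻ z in Ioi (0 : ℝ), ENNReal.ofReal (z ^ (p - 1) * (nuPlus s ν z + nuMinus s ν z)) < ∞ := by
  rw [← Ioo_union_Ici_eq_Ioi zero_lt_one]
  refine (lintegral_union_le _ _ _).trans_lt (ENNReal.add_lt_top.2 ⟨?_, ?_⟩)
  · refine lintegral_ofReal_lt_top_of_le_mul (g := fun z => z ^ (p - 1)) (c := 4) (by norm_num)
      ((ae_restrict_iff' measurableSet_Ioo).2 (ae_of_all _ fun z hz => ?_))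
      ((intervalIntegral.integrableOn_Ioo_rpow_iff one_pos).2 (by linarith)).lintegral_lt_top
    rw [mul_comm 4]
    exact mul_le_mul_of_nonneg_left (nuPlus_add_nuMinus_le_four hs hmono hs0 hz.1)
      (Real.rpow_nonneg hz.1.le _)
  refine lintegral_ofReal_lt_top_of_le_add (inv_nonneg.2 hk.le) zero_le_two
    ((measurable_id.pow_const _).mul antitone_twoSidedTail.measurable).aemeasurable
    ((ae_restrict_iff' measurableSet_Ici).2 (ae_of_all _ fun z (hz : 1 ≤ z) => ?_)) hD
    (((lintegral_abs_rpow_lt_top_iff ν hp).1 hmom).trans_le'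
      (lintegral_mono_set (Ici_subset_Ioi.2 one_pos)))
  have hz0 : 0 < z := one_pos.trans_le hz
  have hsz := hlow z (by rwa [abs_of_pos hz0])
  have hsz' := hlow (-z) (by rwa [abs_neg, abs_of_pos hz0])
  rw [abs_of_pos hz0, abs_of_pos (hs0 ▸ hmono hz0)] at hsz
  rw [abs_neg, abs_of_pos hz0, abs_of_neg (hs0 ▸ hmono (neg_neg_of_pos hz0))] at hsz'
  calc z ^ (p - 1) * (nuPlus s ν z + nuMinus s ν z)
      ≤ z ^ (p - 1) * (|cY s ν z - cY s ν (-z)| / (k * z ^ r) + 2 * twoSidedTail ν z) :=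
        mul_le_mul_of_nonneg_left (nuPlus_add_nuMinus_le hs hmono hs0 hz0
          (mul_pos hk (Real.rpow_pos_of_pos hz0 r)) hsz hsz') (Real.rpow_nonneg hz0.le _)
    _ = k⁻¹ * (z ^ (p - r - 1) * |cY s ν z - cY s ν (-z)|) +
          2 * (z ^ (p - 1) * twoSidedTail ν z) := by
        rw [show p - r - 1 = p - 1 - r by ring, Real.rpow_sub hz0 (p - 1) r]
        ring

theorem lintegral_abs_rpow_lt_top_of_lintegral_nuPlus_add_nuMinus (hs : Continuous s)
    (hmono : StrictMono s) (hs0 : s 0 = 0) [IsFiniteMeasure ν] {p : ℝ} (hp : 0 < p)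
    (hN : ∫⁻ z in Ioi (0 : ℝ),
      ENNReal.ofReal (z ^ (p - 1) * (nuPlus s ν z + nuMinus s ν z)) < ∞) :
    ∫⁻ y, ENNReal.ofReal (|y| ^ p) ∂ν < ∞ :=
  (lintegral_abs_rpow_lt_top_iff ν hp).2 <| (setLIntegral_mono' measurableSet_Ioi fun _ hz =>
    ENNReal.ofReal_le_ofReal (mul_le_mul_of_nonneg_left
      (twoSidedTail_le_nuPlus_add_nuMinus hs hmono hs0 hz) (Real.rpow_nonneg hz.le _))).trans_lt hN

theorem lintegral_cY_sub_cY_neg_lt_top_of_lintegral_nuPlus_add_nuMinus (hs : Continuous s)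
    (hmono : StrictMono s) (hs0 : s 0 = 0) [IsProbabilityMeasure ν] {p q K : ℝ} (hK : 0 < K)
    (hup : ∀ y : ℝ, 1 ≤ |y| → |s y| ≤ K * |y| ^ q)
    (hN : ∫⁻ z in Ioi (0 : ℝ),
      ENNReal.ofReal (z ^ (p - 1) * (nuPlus s ν z + nuMinus s ν z)) < ∞) :
    ∫⁻ y in Ici (1 : ℝ), ENNReal.ofReal (y ^ (p - q - 1) * |cY s ν y - cY s ν (-y)|) < ∞ := by
  refine lintegral_ofReal_lt_top_of_le_mul (c := 2 * K) (by positivity)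
    ((ae_restrict_iff' measurableSet_Ici).2 (ae_of_all _ fun z (hz : 1 ≤ z) => ?_))
    (hN.trans_le' (lintegral_mono_set (Ici_subset_Ioi.2 one_pos)))
  have hz0 : 0 < z := one_pos.trans_le hz
  have hsz := hup z (by rwa [abs_of_pos hz0])
  have hsz' := hup (-z) (by rwa [abs_neg, abs_of_pos hz0])
  rw [abs_of_pos hz0, abs_of_pos (hs0 ▸ hmono hz0)] at hsz
  rw [abs_neg, abs_of_pos hz0, abs_of_neg (hs0 ▸ hmono (neg_neg_of_pos hz0))] at hsz'
  have hN0 : 0 ≤ nuPlus s ν z + nuMinus s ν z :=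
    twoSidedTail_nonneg z |>.trans (twoSidedTail_le_nuPlus_add_nuMinus hs hmono hs0 hz0)
  calc z ^ (p - q - 1) * |cY s ν z - cY s ν (-z)|
      ≤ z ^ (p - q - 1) * ((nuPlus s ν z + nuMinus s ν z) * (2 * (K * z ^ q))) :=
        mul_le_mul_of_nonneg_left ((abs_cY_sub_cY_neg_le hs hmono hs0 hz0).trans
          (mul_le_mul_of_nonneg_left (by linarith) hN0)) (Real.rpow_nonneg hz0.le _)
    _ = 2 * K * (z ^ (p - 1) * (nuPlus s ν z + nuMinus s ν z)) := by
        rw [show p - 1 = p - q - 1 + q by ring, Real.rpow_add hz0 (p - q - 1) q]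
        ring

end PolynomialScale

theorem Hp_embedding_polynomial_scale_r_le_p_le_q_general
    (s : ℝ → ℝ) (hs : Continuous s) (hmono : StrictMono s) (hs0 : s 0 = 0)
    (ν : Measure ℝ) [IsProbabilityMeasure ν]
    (p q r k K : ℝ) (hp : 0 < p) (hk : 0 < k) (hK : 0 < K)
    (hbound : ∀ y : ℝ, 1 ≤ |y| → k * |y| ^ r ≤ |s y| ∧ |s y| ≤ K * |y| ^ q) :
    ((∫⁻ y, ENNReal.ofReal (|y| ^ p) ∂ν < ⊤ ∧
        ∫⁻ y in Ici (1 : ℝ), ENNReal.ofReal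
          (y ^ (p - r - 1) * |cY s ν y - cY s ν (-y)|) < ⊤) →
      ∫⁻ z in Ioi (0 : ℝ), ENNReal.ofReal
        (z ^ (p - 1) * (nuPlus s ν z + nuMinus s ν z)) < ⊤) ∧
    ((∫⁻ z in Ioi (0 : ℝ), ENNReal.ofReal
        (z ^ (p - 1) * (nuPlus s ν z + nuMinus s ν z)) < ⊤) →
      ∫⁻ y, ENNReal.ofReal (|y| ^ p) ∂ν < ⊤ ∧
        ∫⁻ y in Ici (1 : ℝ), ENNReal.ofReal
          (y ^ (p - q - 1) * |cY s ν y - cY s ν (-y)|) < ⊤) ∧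
    (r = q →
      ((∫⁻ y, ENNReal.ofReal (|y| ^ p) ∂ν < ⊤ ∧
          ∫⁻ y in Ici (1 : ℝ), ENNReal.ofReal
            (y ^ (p - r - 1) * |cY s ν y - cY s ν (-y)|) < ⊤) ↔
        ∫⁻ z in Ioi (0 : ℝ), ENNReal.ofReal
          (z ^ (p - 1) * (nuPlus s ν z + nuMinus s ν z)) < ⊤)) := by
  have forward := fun h : _ ∧ _ => lintegral_nuPlus_add_nuMinus_lt_top (ν := ν) hs hmono hs0 hp hk
    (fun y hy => (hbound y hy).1) h.1 h.2
  have backward := fun hN => And.intro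
    (lintegral_abs_rpow_lt_top_of_lintegral_nuPlus_add_nuMinus (ν := ν) hs hmono hs0 hp hN)
    (lintegral_cY_sub_cY_neg_lt_top_of_lintegral_nuPlus_add_nuMinus (q := q) hs hmono hs0 hK
      (fun y hy => (hbound y hy).2) hN)
  refine ⟨forward, backward, ?_⟩
  rintro rfl
  exact ⟨forward, backward⟩

/-- Theorem 4(iii) of the paper: case `r ≤ p ≤ q` under the polynomial
growth bounds `k|y|^r ≤ |s(y)| ≤ K|y|^q` for `|y| ≥ 1`; when `r = q` the sufficient and
necessary conditions coincide, giving an equivalence. -/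
theorem Hp_embedding_polynomial_scale_r_le_p_le_q
    (s : ℝ → ℝ) (hs : Continuous s) (hmono : StrictMono s) (hs0 : s 0 = 0)
    (ν : Measure ℝ) [IsProbabilityMeasure ν] (hν0 : ν {0} = 0)
    (p q r k K : ℝ) (hp : 0 < p) (hk : 0 < k) (hK : 0 < K)
    (hr : 0 ≤ r) (hrp : r ≤ p) (hpq : p ≤ q)
    (hbound : ∀ y : ℝ, 1 ≤ |y| → k * |y| ^ r ≤ |s y| ∧ |s y| ≤ K * |y| ^ q) :
    ((∫⁻ y, ENNReal.ofReal (|y| ^ p) ∂ν < ⊤ ∧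
        ∫⁻ y in Ici (1 : ℝ), ENNReal.ofReal
          (y ^ (p - r - 1) * |cY s ν y - cY s ν (-y)|) < ⊤) →
      ∫⁻ z in Ioi (0 : ℝ), ENNReal.ofReal
        (z ^ (p - 1) * (nuPlus s ν z + nuMinus s ν z)) < ⊤) ∧
    ((∫⁻ z in Ioi (0 : ℝ), ENNReal.ofReal
        (z ^ (p - 1) * (nuPlus s ν z + nuMinus s ν z)) < ⊤) →
      ∫⁻ y, ENNReal.ofReal (|y| ^ p) ∂ν < ⊤ ∧
        ∫⁻ y in Ici (1 : ℝ), ENNReal.ofReal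
          (y ^ (p - q - 1) * |cY s ν y - cY s ν (-y)|) < ⊤) ∧
    (r = q →
      ((∫⁻ y, ENNReal.ofReal (|y| ^ p) ∂ν < ⊤ ∧
          ∫⁻ y in Ici (1 : ℝ), ENNReal.ofReal
            (y ^ (p - r - 1) * |cY s ν y - cY s ν (-y)|) < ⊤) ↔
        ∫⁻ z in Ioi (0 : ℝ), ENNReal.ofReal
          (z ^ (p - 1) * (nuPlus s ν z + nuMinus s ν z)) < ⊤)) :=
  Hp_embedding_polynomial_scale_r_le_p_le_q_general s hs hmono hs0 ν p q r k K hp hk hK hbound
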